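/- arXiv:2511.06502 — 2 statements merged into one kernel-verified Lean document; each statement's English description precedes it below -/
import Mathlib

section
/- For every object A of a weakly lex Pos-enriched category C, the object ΓA is so-projective in the exact completion C_ex: the functor C_ex(ΓA, −) : C_ex → Pos preserves so-morphisms. Hence the image of Γ is a projective cover of C_ex. -/
open CategoryTheory

universe w v u v' u' v'' u''

/-- A `Pos`-enriched category: each hom-set carries a partial order and
composition is monotone in both variables. -/
class PosEnriched (C : Type u) [Category.{v} C] where
  homOrder : ∀ X Y : C, PartialOrder (X ⟶ Y)
  comp_mono : ∀ {X Y Z : C} {f f' : X ⟶ Y} {g g' : Y ⟶ Z},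
    (homOrder X Y).le f f' → (homOrder Y Z).le g g' → (homOrder X Z).le (f ≫ g) (f' ≫ g')

attribute [instance] PosEnriched.homOrder

namespace PosEnr

variable {C : Type u} [Category.{v} C] [PosEnriched C]

theorem comp_mono' {X Y Z : C} {f f' : X ⟶ Y} {g g' : Y ⟶ Z} (h : f ≤ f') (h' : g ≤ g') :
    f ≫ g ≤ f' ≫ g' := PosEnriched.comp_mono h h'

/-- `m` is an order-monomorphism (ff-morphism): postcomposition reflects the order
(hence, by antisymmetry, is also injective). -/
def OrderMono {X Y : C} (m : X ⟶ Y) : Prop :=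
  ∀ {Z : C} (u v : Z ⟶ X), u ≫ m ≤ v ≫ m → u ≤ v

/-- `e` is an so-morphism: it is left orthogonal, in the `Pos`-enriched sense, to all
order-monomorphisms (the relevant square of hom-posets is a pullback in `Pos`). -/
def IsSo {A B : C} (e : A ⟶ B) : Prop :=
  ∀ {X Y : C} (m : X ⟶ Y), OrderMono m →
    (∀ (f : A ⟶ X) (g : B ⟶ Y), f ≫ m = e ≫ g → ∃ h : B ⟶ X, e ≫ h = f ∧ h ≫ m = g) ∧
    (∀ h h' : B ⟶ X, e ≫ h ≤ e ≫ h' → h ≫ m ≤ h' ≫ m → h ≤ h')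

/-- `e : I ⟶ X` is the (conical, `Pos`-enriched) inserter of the ordered pair `(f, g)`. -/
def IsInserterP {X Y I : C} (f g : X ⟶ Y) (e : I ⟶ X) : Prop :=
  e ≫ f ≤ e ≫ g ∧
  (∀ {Z : C} (h : Z ⟶ X), h ≫ f ≤ h ≫ g → ∃ u : Z ⟶ I, u ≫ e = h) ∧
  OrderMono e

/-- A weak inserter: only the existence part of the universal property. -/
def IsWeakInserter {X Y I : C} (f g : X ⟶ Y) (e : I ⟶ X) : Prop :=
  e ≫ f ≤ e ≫ g ∧
  (∀ {Z : C} (h : Z ⟶ X), h ≫ f ≤ h ≫ g → ∃ u : Z ⟶ I, u ≫ e = h)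

/-- `q : Y ⟶ Q` is the coinserter of the ordered pair `(u, v)`. -/
def IsCoinserterP {X Y Q : C} (u v : X ⟶ Y) (q : Y ⟶ Q) : Prop :=
  u ≫ q ≤ v ≫ q ∧
  (∀ {Z : C} (h : Y ⟶ Z), u ≫ h ≤ v ≫ h → ∃ t : Q ⟶ Z, q ≫ t = h) ∧
  (∀ {Z : C} (h h' : Q ⟶ Z), q ≫ h ≤ q ≫ h' → h ≤ h')

/-- `(c0, c1)` is the comma object (lax pullback) of the ordered pair `(f, g)`. -/
def IsCommaP {X Y Z P : C} (f : X ⟶ Z) (g : Y ⟶ Z) (c0 : P ⟶ X) (c1 : P ⟶ Y) : Prop :=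
  c0 ≫ f ≤ c1 ≫ g ∧
  (∀ {A : C} (u0 : A ⟶ X) (u1 : A ⟶ Y), u0 ≫ f ≤ u1 ≫ g →
      ∃ w : A ⟶ P, w ≫ c0 = u0 ∧ w ≫ c1 = u1) ∧
  (∀ {A : C} (w w' : A ⟶ P), w ≫ c0 ≤ w' ≫ c0 → w ≫ c1 ≤ w' ≫ c1 → w ≤ w')

/-- An effective epimorphism: a coinserter of some pair. -/
def EffectiveEpiP {Y Q : C} (q : Y ⟶ Q) : Prop :=
  ∃ (X : C) (u v : X ⟶ Y), IsCoinserterP u v q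

/-- Binary product in the `Pos`-enriched (conical) sense. -/
def IsBinProdP {X Y P : C} (p : P ⟶ X) (q : P ⟶ Y) : Prop :=
  (∀ {Z : C} (f : Z ⟶ X) (g : Z ⟶ Y), ∃ h : Z ⟶ P, h ≫ p = f ∧ h ≫ q = g) ∧
  (∀ {Z : C} (h h' : Z ⟶ P), h ≫ p ≤ h' ≫ p → h ≫ q ≤ h' ≫ q → h ≤ h')

/-- Terminal object in the `Pos`-enriched sense. -/
def IsTerminalP (T : C) : Prop :=
  ∀ X : C, ∃ f : X ⟶ T, ∀ g : X ⟶ T, g = f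

/-- Product of a (possibly infinite) family in the `Pos`-enriched sense. -/
def IsProdFamP {ι : Type w} (X : ι → C) (P : C) (p : ∀ i, P ⟶ X i) : Prop :=
  (∀ {Z : C} (f : ∀ i, Z ⟶ X i), ∃ h : Z ⟶ P, ∀ i, h ≫ p i = f i) ∧
  (∀ {Z : C} (h h' : Z ⟶ P), (∀ i, h ≫ p i ≤ h' ≫ p i) → h ≤ h')

/-- Weak product of a family: only the existence part. -/
def IsWeakProdFam {ι : Type w} (X : ι → C) (P : C) (p : ∀ i, P ⟶ X i) : Prop :=
  ∀ {Z : C} (f : ∀ i, Z ⟶ X i), ∃ h : Z ⟶ P, ∀ i, h ≫ p i = f i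

/-- Pullback in the `Pos`-enriched (conical) sense. -/
def IsPullbackP {X Y Z P : C} (f : X ⟶ Z) (g : Y ⟶ Z) (p0 : P ⟶ X) (p1 : P ⟶ Y) : Prop :=
  p0 ≫ f = p1 ≫ g ∧
  (∀ {A : C} (u0 : A ⟶ X) (u1 : A ⟶ Y), u0 ≫ f = u1 ≫ g →
      ∃ w : A ⟶ P, w ≫ p0 = u0 ∧ w ≫ p1 = u1) ∧
  (∀ {A : C} (w w' : A ⟶ P), w ≫ p0 ≤ w' ≫ p0 → w ≫ p1 ≤ w' ≫ p1 → w ≤ w')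

/-- A congruence, given by a jointly order-monic pair which is order-reflexive and
transitive (in terms of generalized elements). -/
def IsCongPair {S X : C} (s0 s1 : S ⟶ X) : Prop :=
  (∀ {A : C} (u v : A ⟶ S), u ≫ s0 ≤ v ≫ s0 → u ≫ s1 ≤ v ≫ s1 → u ≤ v) ∧
  (∀ {A : C} (a0 a1 : A ⟶ X), a0 ≤ a1 → ∃ u : A ⟶ S, u ≫ s0 = a0 ∧ u ≫ s1 = a1) ∧
  (∀ {A : C} (u v : A ⟶ S), u ≫ s1 = v ≫ s0 →
      ∃ t : A ⟶ S, t ≫ s0 = u ≫ s0 ∧ t ≫ s1 = v ≫ s1)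

/-- An so-projective object: its covariant hom-functor to `Pos` preserves so-morphisms
(equivalently, sends them to surjections). -/
def SoProjective (P : C) : Prop :=
  ∀ {A B : C} (e : A ⟶ B), IsSo e → ∀ f : P ⟶ B, ∃ g : P ⟶ A, g ≫ e = f

end PosEnr

/-- A weight `W : D ⥤ Pos` for `Pos`-enriched weighted limits, given concretely. -/
structure PosWeight (D : Type u') [Category.{v'} D] [PosEnriched D] where
  obj : D → Type
  po : ∀ d, PartialOrder (obj d)
  map : ∀ {d d' : D}, (d ⟶ d') → obj d → obj d'
  map_monotone : ∀ {d d' : D} (f : d ⟶ d') (x y : obj d),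
    (po d).le x y → (po d').le (map f x) (map f y)
  map_id : ∀ (d : D) (x : obj d), map (𝟙 d) x = x
  map_comp : ∀ {d d' d'' : D} (f : d ⟶ d') (g : d' ⟶ d'') (x : obj d),
    map (f ≫ g) x = map g (map f x)
  map_le : ∀ {d d' : D} {f g : d ⟶ d'}, f ≤ g → ∀ x : obj d, (po d').le (map f x) (map g x)

attribute [instance] PosWeight.po

/-- A finite weight: finitely many objects, finite hom-posets, finite values. -/
def PosWeight.IsFiniteWeight {D : Type u'} [Category.{v'} D] [PosEnriched D]
    (W : PosWeight D) : Prop :=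
  Finite D ∧ (∀ d d' : D, Finite (d ⟶ d')) ∧ ∀ d, Finite (W.obj d)

/-- A `Pos`-enriched (locally monotone) functor. -/
structure PosFunctor (C : Type u) (E : Type u') [Category.{v} C] [Category.{v'} E]
    [PosEnriched C] [PosEnriched E] where
  toFunctor : C ⥤ E
  map_le : ∀ {X Y : C} {f g : X ⟶ Y}, f ≤ g → toFunctor.map f ≤ toFunctor.map g

/-- Composition of `Pos`-enriched functors. -/
def PosFunctor.comp {D : Type u''} {C : Type u} {E : Type u'}
    [Category.{v''} D] [Category.{v} C] [Category.{v'} E]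
    [PosEnriched D] [PosEnriched C] [PosEnriched E]
    (G : PosFunctor D C) (F : PosFunctor C E) : PosFunctor D E where
  toFunctor := G.toFunctor ⋙ F.toFunctor
  map_le h := F.map_le (G.map_le h)

/-- A cylinder (`Pos`-natural transformation) `W ⟶ C(L, F-)`. -/
structure Cylinder {D : Type u'} [Category.{v'} D] [PosEnriched D] (W : PosWeight D)
    {E : Type u} [Category.{v} E] [PosEnriched E] (F : PosFunctor D E) (L : E) where
  app : ∀ d : D, W.obj d → (L ⟶ F.toFunctor.obj d)
  monotone : ∀ (d : D) (x y : W.obj d), (W.po d).le x y → app d x ≤ app d y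
  naturality : ∀ {d d' : D} (f : d ⟶ d') (x : W.obj d),
    app d x ≫ F.toFunctor.map f = app d' (W.map f x)

/-- The image of a cylinder under a `Pos`-enriched functor. -/
def Cylinder.mapF {D : Type u''} {C : Type u} {E : Type u'}
    [Category.{v''} D] [Category.{v} C] [Category.{v'} E]
    [PosEnriched D] [PosEnriched C] [PosEnriched E]
    {W : PosWeight D} {G : PosFunctor D C} {L : C}
    (F : PosFunctor C E) (c : Cylinder W G L) :
    Cylinder W (G.comp F) (F.toFunctor.obj L) where
  app d x := F.toFunctor.map (c.app d x)
  monotone d x y h := F.map_le (c.monotone d x y h)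
  naturality f x := by
    show F.toFunctor.map _ ≫ F.toFunctor.map _ = _
    rw [← F.toFunctor.map_comp, c.naturality]

/-- `L` with cylinder `c` is a weak `W`-weighted limit of `F`:
the induced comparison maps on hom-posets are surjective. -/
def IsWeakWeightedLimitP {D : Type u'} [Category.{v'} D] [PosEnriched D] (W : PosWeight D)
    {E : Type u} [Category.{v} E] [PosEnriched E] (F : PosFunctor D E)
    (L : E) (c : Cylinder W F L) : Prop :=
  ∀ (Z : E) (φ : Cylinder W F Z), ∃ h : Z ⟶ L, ∀ (d : D) (x : W.obj d),
    h ≫ c.app d x = φ.app d x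

/-- `L` with cylinder `c` is a (strong) `W`-weighted limit of `F`. -/
def IsWeightedLimitP {D : Type u'} [Category.{v'} D] [PosEnriched D] (W : PosWeight D)
    {E : Type u} [Category.{v} E] [PosEnriched E] (F : PosFunctor D E)
    (L : E) (c : Cylinder W F L) : Prop :=
  IsWeakWeightedLimitP W F L c ∧
  ∀ (Z : E) (h h' : Z ⟶ L), (∀ (d : D) (x : W.obj d), h ≫ c.app d x ≤ h' ≫ c.app d x) → h ≤ h'

/-- A weakly lex `Pos`-category: all weak finite weighted limits exist. -/
def WeaklyLex (C : Type u) [Category.{v} C] [PosEnriched C] : Prop :=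
  ∀ (D : Type) [SmallCategory D] [PosEnriched D] (W : PosWeight D) (F : PosFunctor D C),
    W.IsFiniteWeight → ∃ (L : C) (c : Cylinder W F L), IsWeakWeightedLimitP W F L c

/-- All finite weighted limits exist (in the strong sense). -/
def HasFiniteWeightedLimitsP (C : Type u) [Category.{v} C] [PosEnriched C] : Prop :=
  ∀ (D : Type) [SmallCategory D] [PosEnriched D] (W : PosWeight D) (F : PosFunctor D C),
    W.IsFiniteWeight → ∃ (L : C) (c : Cylinder W F L), IsWeightedLimitP W F L c

open PosEnr

/-- A regular `Pos`-enriched category. -/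
def IsRegularCat (C : Type u) [Category.{v} C] [PosEnriched C] : Prop :=
  HasFiniteWeightedLimitsP C ∧
  (∀ {X Y : C} (f : X ⟶ Y), ∃ (I : C) (e : X ⟶ I) (m : I ⟶ Y),
      IsSo e ∧ OrderMono m ∧ e ≫ m = f) ∧
  (∀ {X Y Z P : C} (f : X ⟶ Z) (g : Y ⟶ Z) (p0 : P ⟶ X) (p1 : P ⟶ Y),
      IsPullbackP f g p0 p1 → IsSo f → IsSo p1)

/-- An exact `Pos`-enriched category: regular, and every congruence is effective,
i.e. is the kernel congruence (comma object `q/q`) of some morphism. -/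
def IsExactCat (C : Type u) [Category.{v} C] [PosEnriched C] : Prop :=
  IsRegularCat C ∧
  ∀ {S X : C} (s0 s1 : S ⟶ X), IsCongPair s0 s1 →
    ∃ (Q : C) (q : X ⟶ Q), IsCommaP q q s0 s1

/-- Fully order-faithful: full and order-reflecting (hence faithful) on hom-posets. -/
def FullyOrderFaithful {C : Type u} {E : Type u'} [Category.{v} C] [Category.{v'} E]
    [PosEnriched C] [PosEnriched E] (F : PosFunctor C E) : Prop :=
  (∀ {X Y : C} (g : F.toFunctor.obj X ⟶ F.toFunctor.obj Y), ∃ f : X ⟶ Y, F.toFunctor.map f = g) ∧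
  (∀ {X Y : C} (f g : X ⟶ Y), F.toFunctor.map f ≤ F.toFunctor.map g → f ≤ g)

/-- An equivalence of `Pos`-enriched categories. -/
def IsEquivP {C : Type u} {E : Type u'} [Category.{v} C] [Category.{v'} E]
    [PosEnriched C] [PosEnriched E] (F : PosFunctor C E) : Prop :=
  FullyOrderFaithful F ∧ ∀ Y : E, ∃ X : C, Nonempty (F.toFunctor.obj X ≅ Y)

/-- Preservation of all finite weighted limits by a `Pos`-enriched functor. -/
def PreservesFiniteWeightedLimitsP {C : Type u} {E : Type u'} [Category.{v} C] [Category.{v'} E]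
    [PosEnriched C] [PosEnriched E] (F : PosFunctor C E) : Prop :=
  ∀ (D : Type) [SmallCategory D] [PosEnriched D] (W : PosWeight D), W.IsFiniteWeight →
    ∀ (G : PosFunctor D C) (L : C) (c : Cylinder W G L),
      IsWeightedLimitP W G L c →
      IsWeightedLimitP W (G.comp F) (F.toFunctor.obj L) (c.mapF F)

/-- A regular `Pos`-enriched functor: preserves finite weighted limits and effective
epimorphisms. -/
def IsRegularFunctor {C : Type u} {E : Type u'} [Category.{v} C] [Category.{v'} E]
    [PosEnriched C] [PosEnriched E] (F : PosFunctor C E) : Prop :=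
  PreservesFiniteWeightedLimitsP F ∧
  ∀ {X Y : C} (e : X ⟶ Y), EffectiveEpiP e → EffectiveEpiP (F.toFunctor.map e)

/-- A left covering functor: for every weak finite weighted limit in the domain, any
comparison morphism into the corresponding (strong) limit in the codomain is an
effective epimorphism. -/
def LeftCovering {C : Type u} {E : Type u'} [Category.{v} C] [Category.{v'} E]
    [PosEnriched C] [PosEnriched E] (F : PosFunctor C E) : Prop :=
  ∀ (D : Type) [SmallCategory D] [PosEnriched D] (W : PosWeight D), W.IsFiniteWeight →
    ∀ (G : PosFunctor D C) (L : C) (c : Cylinder W G L), IsWeakWeightedLimitP W G L c →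
    ∀ (L' : E) (c' : Cylinder W (G.comp F) L'), IsWeightedLimitP W (G.comp F) L' c' →
    ∀ h : F.toFunctor.obj L ⟶ L', (∀ (d : D) (x : W.obj d),
        h ≫ c'.app d x = F.toFunctor.map (c.app d x)) →
      EffectiveEpiP h

/-- The full subcategory of a `Pos`-enriched category is `Pos`-enriched. -/
instance fullSubPosEnriched {C : Type u} [Category.{v} C] [PosEnriched C] (Z : C → Prop) :
    PosEnriched (ObjectProperty.FullSubcategory Z) where
  homOrder X Y := PartialOrder.lift (fun f => f.hom) (fun _ _ h => InducedCategory.hom_ext h)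
  comp_mono h h' := PosEnriched.comp_mono h h'

/-! ## The exact completion -/

open PosEnr

/-- A pseudocongruence in a `Pos`-enriched category: an order-reflexive and transitive
parallel pair. These are the objects of the exact completion. -/
structure ExObj (C : Type u) [Category.{v} C] [PosEnriched C] where
  X : C
  R : C
  r0 : R ⟶ X
  r1 : R ⟶ X
  orefl : ∀ {A : C} (a0 a1 : A ⟶ X), a0 ≤ a1 → ∃ u : A ⟶ R, u ≫ r0 = a0 ∧ u ≫ r1 = a1
  tra : ∀ {A : C} (u v : A ⟶ R), u ≫ r1 = v ≫ r0 →
    ∃ t : A ⟶ R, t ≫ r0 = u ≫ r0 ∧ t ≫ r1 = v ≫ r1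

namespace ExObj

variable {C : Type u} [Category.{v} C] [PosEnriched C]

/-- `f : X ⟶ Y` is compatible from `(X,R)` to `(Y,S)`. -/
def Compat (A B : ExObj C) (f : A.X ⟶ B.X) : Prop :=
  ∃ fb : A.R ⟶ B.R, fb ≫ B.r0 = A.r0 ≫ f ∧ fb ≫ B.r1 = A.r1 ≫ f

/-- The preorder `f ≼ g` on compatible morphisms, given by factoring `(f,g)` through
the codomain pseudocongruence. -/
def Pre (A B : ExObj C) (f g : A.X ⟶ B.X) : Prop :=
  ∃ s : A.X ⟶ B.R, s ≫ B.r0 = f ∧ s ≫ B.r1 = g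

theorem Pre.refl (A B : ExObj C) (f : A.X ⟶ B.X) : Pre A B f f := by
  obtain ⟨u, h0, h1⟩ := B.orefl f f le_rfl
  exact ⟨u, h0, h1⟩

theorem Pre.trans' {A B : ExObj C} {f g h : A.X ⟶ B.X}
    (h1 : Pre A B f g) (h2 : Pre A B g h) : Pre A B f h := by
  obtain ⟨s, hs0, hs1⟩ := h1
  obtain ⟨t, ht0, ht1⟩ := h2
  obtain ⟨w, hw0, hw1⟩ := B.tra s t (by rw [hs1, ht0])
  exact ⟨w, by rw [hw0, hs0], by rw [hw1, ht1]⟩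

theorem Compat.comp {A B D : ExObj C} {f : A.X ⟶ B.X} {g : B.X ⟶ D.X}
    (hf : Compat A B f) (hg : Compat B D g) : Compat A D (f ≫ g) := by
  obtain ⟨fb, h0, h1⟩ := hf
  obtain ⟨gb, k0, k1⟩ := hg
  refine ⟨fb ≫ gb, ?_, ?_⟩
  · rw [Category.assoc, k0, ← Category.assoc, h0, Category.assoc]
  · rw [Category.assoc, k1, ← Category.assoc, h1, Category.assoc]

theorem Pre.comp_left {A B D : ExObj C} {f f' : A.X ⟶ B.X} (g : B.X ⟶ D.X)
    (hg : Compat B D g) (h : Pre A B f f') : Pre A D (f ≫ g) (f' ≫ g) := by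
  obtain ⟨s, hs0, hs1⟩ := h
  obtain ⟨gb, k0, k1⟩ := hg
  refine ⟨s ≫ gb, ?_, ?_⟩
  · rw [Category.assoc, k0, ← Category.assoc, hs0]
  · rw [Category.assoc, k1, ← Category.assoc, hs1]

theorem Pre.comp_right {A B D : ExObj C} (f : A.X ⟶ B.X) {g g' : B.X ⟶ D.X}
    (h : Pre B D g g') : Pre A D (f ≫ g) (f ≫ g') := by
  obtain ⟨s, hs0, hs1⟩ := h
  exact ⟨f ≫ s, by rw [Category.assoc, hs0], by rw [Category.assoc, hs1]⟩

theorem Pre.compCongr {A B D : ExObj C} {f f' : A.X ⟶ B.X} {g g' : B.X ⟶ D.X}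
    (hg : Compat B D g) (h1 : Pre A B f f') (h2 : Pre B D g g') :
    Pre A D (f ≫ g) (f' ≫ g') :=
  (Pre.comp_left g hg h1).trans' (Pre.comp_right f' h2)

/-- The equivalence relation on compatible morphisms. -/
def exSetoid (A B : ExObj C) : Setoid {f : A.X ⟶ B.X // Compat A B f} where
  r f g := Pre A B f.1 g.1 ∧ Pre A B g.1 f.1
  iseqv := ⟨fun f => ⟨Pre.refl A B f.1, Pre.refl A B f.1⟩, fun h => ⟨h.2, h.1⟩,
    fun h1 h2 => ⟨h1.1.trans' h2.1, h2.2.trans' h1.2⟩⟩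

/-- The exact completion `C_ex` as a category: objects are pseudocongruences, morphisms
are equivalence classes of compatible morphisms. -/
instance exCategory : Category (ExObj C) where
  Hom A B := Quotient (exSetoid A B)
  id A := Quotient.mk _ ⟨𝟙 A.X, ⟨𝟙 A.R, by simp, by simp⟩⟩
  comp {A B D} f g :=
    Quotient.liftOn₂ f g (fun f g => Quotient.mk _ ⟨f.1 ≫ g.1, f.2.comp g.2⟩)
      (fun a b a' b' ha hb => Quotient.sound
        ⟨Pre.compCongr b.2 ha.1 hb.1, Pre.compCongr b'.2 ha.2 hb.2⟩)
  id_comp {A B} f := Quotient.inductionOn f fun f => Quotient.sound (by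
    constructor <;> · simp only [Category.id_comp]; exact Pre.refl A B f.1)
  comp_id {A B} f := Quotient.inductionOn f fun f => Quotient.sound (by
    constructor <;> · simp only [Category.comp_id]; exact Pre.refl A B f.1)
  assoc {A B D E} f g h := Quotient.inductionOn₃ f g h fun f g h => Quotient.sound (by
    constructor <;> · simp only [Category.assoc]; exact Pre.refl A E _)

/-- The `Pos`-enrichment of the exact completion. -/
instance exPosEnriched : PosEnriched (ExObj C) where
  homOrder A B :=
    { le := fun f g => Quotient.liftOn₂ f g (fun f g => Pre A B f.1 g.1)
        (fun a b a' b' ha hb => propext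
          ⟨fun h => (ha.2.trans' h).trans' hb.1, fun h => (ha.1.trans' h).trans' hb.2⟩)
      le_refl := fun f => Quotient.inductionOn f fun f => Pre.refl A B f.1
      le_trans := fun f g h => Quotient.inductionOn₃ f g h
        (fun f g h h1 h2 => Pre.trans' h1 h2)
      le_antisymm := fun f g => Quotient.inductionOn₂ f g
        (fun f g h1 h2 => Quotient.sound ⟨h1, h2⟩) }
  comp_mono {A B D} {f f'} {g g'} h h' := by
    revert h h'
    refine Quotient.inductionOn₂ f f' (fun a a' => Quotient.inductionOn₂ g g'
      (fun b b' h h' => ?_))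
    exact Pre.compCongr b.2 h h'

end ExObj

/-! ## The canonical embedding `Γ : C → C_ex` -/

namespace ExObj

variable {C : Type u} [Category.{v} C] [PosEnriched C]

variable (I : C → C) (i0 i1 : ∀ X : C, I X ⟶ X)

/-- The pseudocongruence `(X, I_X)` associated to a chosen weak comma object `I_X` of
`(1_X, 1_X)`. -/
def commaExObj (hle : ∀ X, i0 X ≤ i1 X)
    (hfac : ∀ (X : C) {A : C} (a0 a1 : A ⟶ X), a0 ≤ a1 →
      ∃ u : A ⟶ I X, u ≫ i0 X = a0 ∧ u ≫ i1 X = a1) (X : C) : ExObj C where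
  X := X
  R := I X
  r0 := i0 X
  r1 := i1 X
  orefl a0 a1 h := hfac X a0 a1 h
  tra u v huv := by
    refine hfac X _ _ ?_
    calc u ≫ i0 X ≤ u ≫ i1 X := PosEnriched.comp_mono le_rfl (hle X)
      _ = v ≫ i0 X := huv
      _ ≤ v ≫ i1 X := PosEnriched.comp_mono le_rfl (hle X)

/-- The canonical functor `Γ : C → C_ex`, `X ↦ (X, I_X)`, `f ↦ [f]`. -/
def GammaFunc (hle : ∀ X, i0 X ≤ i1 X)
    (hfac : ∀ (X : C) {A : C} (a0 a1 : A ⟶ X), a0 ≤ a1 →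
      ∃ u : A ⟶ I X, u ≫ i0 X = a0 ∧ u ≫ i1 X = a1) : C ⥤ ExObj C where
  obj X := commaExObj I i0 i1 hle hfac X
  map {X Y} f := Quotient.mk _ ⟨f, by
    obtain ⟨u, h0, h1⟩ := hfac Y (i0 X ≫ f) (i1 X ≫ f)
      (PosEnriched.comp_mono (hle X) le_rfl)
    exact ⟨u, h0, h1⟩⟩
  map_id X := Quotient.sound (by
    constructor <;> exact Pre.refl _ _ _)
  map_comp f g := Quotient.sound (by
    constructor <;> exact Pre.refl _ _ _)

/-- The canonical quotient morphism `[1_X] : Γ X → (X, R)` in `C_ex`. -/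
def exQuot (hle : ∀ X, i0 X ≤ i1 X)
    (hfac : ∀ (X : C) {A : C} (a0 a1 : A ⟶ X), a0 ≤ a1 →
      ∃ u : A ⟶ I X, u ≫ i0 X = a0 ∧ u ≫ i1 X = a1) (A : ExObj C) :
    (GammaFunc I i0 i1 hle hfac).obj A.X ⟶ A :=
  Quotient.mk _ ⟨𝟙 A.X, by
    obtain ⟨u, h0, h1⟩ := A.orefl (i0 A.X) (i1 A.X) (hle A.X)
    exact ⟨u, by simpa [GammaFunc, commaExObj] using h0, by simpa [GammaFunc, commaExObj] using h1⟩⟩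

end ExObj

/-!
Each `E = (X, R)` of `C_ex` is the coinserter of `Γ r₀, Γ r₁ : Γ R ⇉ Γ X` via the quotient
`[1_X] : Γ X ⟶ E`, and coinserters are so-morphisms; this gives the projective cover.

Every `Γ A ⟶ E` factors through `[1_X]`, so for projectivity of `Γ A` it suffices to lift
`[1] : Γ Q.X ⟶ Q` along an so-morphism `[σ] : P ⟶ Q`. A weak finite limit in `C` pulls the
pseudocongruence of `Q` back along `σ` to a pseudocongruence `σ*Q` on `P.X`; then `[σ]` is
`[1] : P ⟶ σ*Q` followed by the order-monic `[σ] : σ*Q ⟶ Q`, the so-property gives a diagonal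
`[w] : Q ⟶ σ*Q` with `[w ≫ σ] = 1`, and `[w] : Γ Q.X ⟶ P` is the lift.
-/

namespace PosEnr

variable {C : Type u} [Category.{v} C] [PosEnriched C]

theorem IsCoinserterP.isSo {X Y Q : C} {u v : X ⟶ Y} {q : Y ⟶ Q} (hq : IsCoinserterP u v q) :
    IsSo q := by
  obtain ⟨huv, hdesc, hreflect⟩ := hq
  have hcancel : ∀ {Z : C} {h h' : Q ⟶ Z}, q ≫ h = q ≫ h' → h = h' := fun he =>
    le_antisymm (hreflect _ _ he.le) (hreflect _ _ he.ge)
  intro _ _ m hm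
  refine ⟨fun f g hfg => ?_, fun h h' hle _ => hreflect h h' hle⟩
  have hf : u ≫ f ≤ v ≫ f := hm _ _ <| by
    simpa only [Category.assoc, hfg] using comp_mono' huv (le_refl g)
  obtain ⟨t, rfl⟩ := hdesc f hf
  exact ⟨t, rfl, hcancel (by rw [← Category.assoc, hfg])⟩

end PosEnr

abbrev PosEnriched.discrete (D : Type u) [Category.{v} D] : PosEnriched D where
  homOrder _ _ :=
    { le := Eq
      le_refl := Eq.refl
      le_trans _ _ _ := Eq.trans
      le_antisymm _ _ h _ := h }
  comp_mono h h' := congrArg₂ (· ≫ ·) h h'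

def PosWeight.const (D : Type u') [Category.{v'} D] [PosEnriched D] : PosWeight D where
  obj _ := PUnit
  po _ := inferInstance
  map _ x := x
  map_monotone _ _ _ h := h
  map_id _ _ := rfl
  map_comp _ _ _ := rfl
  map_le _ _ := le_rfl

theorem PosWeight.const_isFiniteWeight (D : Type) [SmallCategory D] [FinCategory D]
    [PosEnriched D] : (PosWeight.const D).IsFiniteWeight :=
  ⟨inferInstance, fun _ _ => inferInstance, fun _ => inferInstanceAs (Finite PUnit)⟩

def PosFunctor.ofDiscrete {D : Type u'} [Category.{v'} D] {C : Type u} [Category.{v} C]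
    [PosEnriched C] (F : D ⥤ C) : @PosFunctor D C _ _ (PosEnriched.discrete D) _ :=
  @PosFunctor.mk D C _ _ (PosEnriched.discrete D) _ F fun {_ _ _ _} (h : _ = _) => h ▸ le_rfl

open Limits in
theorem WeaklyLex.exists_weak_limit {C : Type u} [Category.{v} C] [PosEnriched C]
    (hC : WeaklyLex C) {D : Type} [SmallCategory D] [FinCategory D] (F : D ⥤ C) :
    ∃ c : Cone F, ∀ s : Cone F, ∃ h : s.pt ⟶ c.pt, ∀ j, h ≫ c.π.app j = s.π.app j := by
  let := PosEnriched.discrete D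
  obtain ⟨L, c, hc⟩ := hC D (PosWeight.const D) (PosFunctor.ofDiscrete F)
    (PosWeight.const_isFiniteWeight D)
  refine ⟨⟨L, ⟨fun j => c.app j PUnit.unit, fun j j' f => ?_⟩⟩, fun s => ?_⟩
  · exact (Category.id_comp _).trans (c.naturality f PUnit.unit).symm
  · obtain ⟨h, hh⟩ := hc s.pt
      { app := fun j _ => s.π.app j
        monotone := fun _ _ _ _ => le_rfl
        naturality := fun f _ => s.w f }
    exact ⟨h, fun j => hh j PUnit.unit⟩

structure WeakInvImage {C : Type u} [Category.{v} C] {X Y S : C} (σ : X ⟶ Y) (s0 s1 : S ⟶ Y) :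
    Type (max u v) where
  T : C
  t0 : T ⟶ X
  t1 : T ⟶ X
  ts : T ⟶ S
  ts_s0 : ts ≫ s0 = t0 ≫ σ
  ts_s1 : ts ≫ s1 = t1 ≫ σ
  exists_lift : ∀ {A : C} (a0 a1 : A ⟶ X) (c : A ⟶ S), c ≫ s0 = a0 ≫ σ → c ≫ s1 = a1 ≫ σ →
    ∃ p : A ⟶ T, p ≫ t0 = a0 ∧ p ≫ t1 = a1

namespace WeakInvImage

open Limits

variable {C : Type u} [Category.{v} C]

abbrev shape : MulticospanShape where
  L := Option Bool
  R := Bool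
  fst := some
  snd _ := none

/-- The diagram `X →σ Y ←s0 S →s1 Y ←σ X`, with `none ↦ S` and `some b ↦ X`. -/
def index {X Y S : C} (σ : X ⟶ Y) (s0 s1 : S ⟶ Y) : MulticospanIndex shape C where
  left
    | none => S
    | some _ => X
  right _ := Y
  fst _ := σ
  snd b := cond b s1 s0

end WeakInvImage

open Limits in
theorem WeaklyLex.nonempty_weakInvImage {C : Type u} [Category.{v} C] [PosEnriched C]
    (hC : WeaklyLex C) {X Y S : C} (σ : X ⟶ Y) (s0 s1 : S ⟶ Y) :
    Nonempty (WeakInvImage σ s0 s1) := by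
  obtain ⟨c, hc⟩ := hC.exists_weak_limit (WeakInvImage.index σ s0 s1).multicospan
  let K : Multifork (WeakInvImage.index σ s0 s1) := c
  refine ⟨⟨c.pt, K.ι (some false), K.ι (some true), K.ι none,
    (K.condition false).symm, (K.condition true).symm, fun a0 a1 c h0 h1 => ?_⟩⟩
  obtain ⟨p, hp⟩ := hc (Multifork.ofι _ _ (fun | none => c | some b => cond b a1 a0)
    (fun | false => h0.symm | true => h1.symm))
  exact ⟨p, hp (.left (some false)), hp (.left (some true))⟩

namespace ExObj

open PosEnr

variable {C : Type u} [Category.{v} C] [PosEnriched C]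

def homMk {A B : ExObj C} (f : A.X ⟶ B.X) (hf : Compat A B f) : A ⟶ B := Quotient.mk _ ⟨f, hf⟩

theorem exists_homMk_eq {A B : ExObj C} (f : A ⟶ B) : ∃ φ hφ, homMk φ hφ = f := by
  obtain ⟨⟨φ, hφ⟩, rfl⟩ := Quotient.exists_rep f
  exact ⟨φ, hφ, rfl⟩

section HomMk

variable {A B : ExObj C} {f g : A.X ⟶ B.X} {hf : Compat A B f} {hg : Compat A B g}

theorem homMk_congr (h : f = g) : homMk f hf = homMk g hg := by
  subst h
  rfl

theorem homMk_eq_homMk_iff : homMk f hf = homMk g hg ↔ Pre A B f g ∧ Pre A B g f :=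
  Quotient.eq

theorem homMk_le_homMk_iff : homMk f hf ≤ homMk g hg ↔ Pre A B f g :=
  Iff.rfl

end HomMk

def comap (Q : ExObj C) {X : C} {σ : X ⟶ Q.X} (T : WeakInvImage σ Q.r0 Q.r1) : ExObj C where
  X := X
  R := T.T
  r0 := T.t0
  r1 := T.t1
  orefl a0 a1 h := by
    obtain ⟨c, hc0, hc1⟩ := Q.orefl (a0 ≫ σ) (a1 ≫ σ) (comp_mono' h le_rfl)
    exact T.exists_lift a0 a1 c hc0 hc1
  tra u v huv := by
    obtain ⟨c, hc0, hc1⟩ := Q.tra (u ≫ T.ts) (v ≫ T.ts) (by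
      simp only [Category.assoc, T.ts_s0, T.ts_s1, reassoc_of% huv])
    refine T.exists_lift _ _ c ?_ ?_
    · rw [hc0, Category.assoc, T.ts_s0, Category.assoc]
    · rw [hc1, Category.assoc, T.ts_s1, Category.assoc]

theorem compat_comap (Q : ExObj C) {X : C} {σ : X ⟶ Q.X} (T : WeakInvImage σ Q.r0 Q.r1) :
    Compat (Q.comap T) Q σ :=
  ⟨T.ts, T.ts_s0, T.ts_s1⟩

theorem orderMono_homMk_comap (Q : ExObj C) {X : C} {σ : X ⟶ Q.X}
    (T : WeakInvImage σ Q.r0 Q.r1) :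
    OrderMono (homMk (A := Q.comap T) σ (compat_comap Q T)) := by
  intro Z u v
  obtain ⟨a, -, rfl⟩ := exists_homMk_eq u
  obtain ⟨b, -, rfl⟩ := exists_homMk_eq v
  rintro ⟨c, hc0, hc1⟩
  exact T.exists_lift a b c hc0 hc1

theorem compat_id_comap {P Q : ExObj C} {σ : P.X ⟶ Q.X} (hσ : Compat P Q σ)
    (T : WeakInvImage σ Q.r0 Q.r1) : Compat P (Q.comap T) (𝟙 P.X) := by
  obtain ⟨σb, hσ0, hσ1⟩ := hσ
  obtain ⟨fb, h0, h1⟩ := T.exists_lift P.r0 P.r1 σb hσ0 hσ1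
  exact ⟨fb, h0.trans (Category.comp_id _).symm, h1.trans (Category.comp_id _).symm⟩

section Gamma

variable (I : C → C) (i0 i1 : ∀ X : C, I X ⟶ X) (hle : ∀ X, i0 X ≤ i1 X)
  (hfac : ∀ (X : C) {A : C} (a0 a1 : A ⟶ X), a0 ≤ a1 →
      ∃ u : A ⟶ I X, u ≫ i0 X = a0 ∧ u ≫ i1 X = a1)

local notation "Γ" => GammaFunc I i0 i1 hle hfac

theorem compat_gamma {A : C} (E : ExObj C) (φ : A ⟶ E.X) : Compat ((Γ).obj A) E φ :=
  E.orefl (i0 A ≫ φ) (i1 A ≫ φ) (comp_mono' (hle A) le_rfl)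

theorem exists_map_comp_exQuot {A : C} {E : ExObj C} (f : (Γ).obj A ⟶ E) :
    ∃ φ : A ⟶ E.X, (Γ).map φ ≫ exQuot I i0 i1 hle hfac E = f := by
  obtain ⟨φ, hφ, rfl⟩ := exists_homMk_eq f
  exact ⟨φ, homMk_congr (Category.comp_id φ)⟩

theorem isCoinserterP_exQuot (E : ExObj C) :
    IsCoinserterP ((Γ).map E.r0) ((Γ).map E.r1) (exQuot I i0 i1 hle hfac E) := by
  refine ⟨⟨𝟙 E.R, ?_, ?_⟩, fun {Z} h => ?_, fun {Z} h h' => ?_⟩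
  · exact (Category.id_comp _).trans (Category.comp_id _).symm
  · exact (Category.id_comp _).trans (Category.comp_id _).symm
  · obtain ⟨φ, -, rfl⟩ := exists_homMk_eq h
    exact fun hφ => ⟨homMk φ hφ, homMk_congr (Category.id_comp φ)⟩
  · obtain ⟨ψ, hψ, rfl⟩ := exists_homMk_eq h
    obtain ⟨ψ', hψ', rfl⟩ := exists_homMk_eq h'
    intro hle'
    have : Pre _ Z (𝟙 E.X ≫ ψ) (𝟙 E.X ≫ ψ') := hle'
    simpa only [homMk_le_homMk_iff, Category.id_comp] using this

theorem exists_comp_eq_exQuot_of_isSo (hC : WeaklyLex C) {P Q : ExObj C} {e : P ⟶ Q}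
    (he : IsSo e) : ∃ g : (Γ).obj Q.X ⟶ P, g ≫ e = exQuot I i0 i1 hle hfac Q := by
  obtain ⟨σ, hσ, rfl⟩ := exists_homMk_eq e
  obtain ⟨T⟩ := hC.nonempty_weakInvImage σ Q.r0 Q.r1
  -- `[σ]` factors through the order-monic `[σ] : σ*Q ⟶ Q`, and the diagonal of that square is
  -- a section of `[σ]` up to the equivalence of `Q`.
  obtain ⟨h, -, hh⟩ := (he _ (orderMono_homMk_comap Q T)).1
    (homMk (B := Q.comap T) (𝟙 P.X) (compat_id_comap hσ T)) (𝟙 Q)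
    (homMk_congr ((Category.id_comp σ).trans (Category.comp_id σ).symm))
  obtain ⟨w, hw, rfl⟩ := exists_homMk_eq h
  refine ⟨homMk w (compat_gamma I i0 i1 hle hfac P w), ?_⟩
  exact homMk_eq_homMk_iff.2 (Quotient.exact hh)

end Gamma

end ExObj

/-- each `Γ A` is so-projective in `C_ex`, and the image of `Γ` is a
projective cover of `C_ex`. -/
theorem statement13 {C : Type u} [Category.{v} C] [PosEnriched C] (hC : WeaklyLex C)
    (I : C → C) (i0 i1 : ∀ X : C, I X ⟶ X) (hle : ∀ X, i0 X ≤ i1 X)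
    (hfac : ∀ (X : C) {A : C} (a0 a1 : A ⟶ X), a0 ≤ a1 →
      ∃ u : A ⟶ I X, u ≫ i0 X = a0 ∧ u ≫ i1 X = a1) :
    (∀ A : C, PosEnr.SoProjective ((ExObj.GammaFunc I i0 i1 hle hfac).obj A)) ∧
    (∀ E : ExObj C, ∃ (A : C) (e : (ExObj.GammaFunc I i0 i1 hle hfac).obj A ⟶ E), PosEnr.IsSo e) := by
  refine ⟨fun A P Q e he f => ?_,
    fun E => ⟨E.X, _, (ExObj.isCoinserterP_exQuot I i0 i1 hle hfac E).isSo⟩⟩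
  obtain ⟨φ, rfl⟩ := ExObj.exists_map_comp_exQuot I i0 i1 hle hfac f
  obtain ⟨g, hg⟩ := ExObj.exists_comp_eq_exQuot_of_isSo I i0 i1 hle hfac hC he
  exact ⟨(ExObj.GammaFunc I i0 i1 hle hfac).map φ ≫ g, by rw [Category.assoc, hg]⟩
end

section
/- In a regular Pos-enriched category E, consider a commutative diagram between two inserter rows: I → X ⇉ Y over I' → X' ⇉ Y', with vertical morphisms q : I → I', p : X → X' an effective epimorphism, and m : Y → Y' an order-monomorphism. Then the left-hand square (i, q, p, i') is a pullback, and consequently the induced morphism q : I → I' is an effective epimorphism. -/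
open CategoryTheory

universe w v u v' u' v'' u''

open PosEnr

/-! ## The exact completion -/

open PosEnr

/-! Precomposed with `m`, a cone `(u₀, u₁)` over `(i', p)` satisfies the inserter condition
of `(f₀, f₁)`; as `m` reflects the order, it factors through `i`, so the square is a pullback.
Effective epimorphisms are so-morphisms, which are stable under pullback, so `q` is an
so-morphism. In a regular category an so-morphism `e` is the coinserter of its kernel `e/e`:
if `h` respects that kernel, factor `⟨e, h⟩ = a ≫ n` with `a` so and `n` order-monic; the
kernel condition descends along `a`, which makes `n ≫ π₁` an order-monic so-morphism, hence
invertible, and `h` factors through `e`. -/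

open Limits

namespace PosEnr

variable {C : Type u} [Category.{v} C] [PosEnriched C]

theorem comp_le_comp_left {X Y Z : C} (f : X ⟶ Y) {g g' : Y ⟶ Z} (h : g ≤ g') :
    f ≫ g ≤ f ≫ g' :=
  comp_mono' le_rfl h

theorem comp_le_comp_right {X Y Z : C} {f f' : X ⟶ Y} (h : f ≤ f') (g : Y ⟶ Z) :
    f ≫ g ≤ f' ≫ g :=
  comp_mono' h le_rfl

theorem OrderMono.eq_of_comp_eq {X Y Z : C} {m : X ⟶ Y} (hm : OrderMono m) {u v : Z ⟶ X}
    (h : u ≫ m = v ≫ m) : u = v :=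
  le_antisymm (hm u v h.le) (hm v u h.ge)

theorem IsPullbackP.symm {X Y Z P : C} {f : X ⟶ Z} {g : Y ⟶ Z} {p0 : P ⟶ X} {p1 : P ⟶ Y}
    (h : IsPullbackP f g p0 p1) : IsPullbackP g f p1 p0 := by
  refine ⟨h.1.symm, fun u1 u0 hu => ?_, fun w w' h1 h0 => h.2.2 w w' h0 h1⟩
  obtain ⟨w, hw0, hw1⟩ := h.2.1 u0 u1 hu.symm
  exact ⟨w, hw1, hw0⟩

theorem IsSo.comp {A B D : C} {e : A ⟶ B} {f : B ⟶ D} (he : IsSo e) (hf : IsSo f) :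
    IsSo (e ≫ f) := by
  intro X Y m hm
  constructor
  · intro u g hug
    obtain ⟨h1, hh1, hh1m⟩ := (he m hm).1 u (f ≫ g) (by rw [hug, Category.assoc])
    obtain ⟨h2, hh2, hh2m⟩ := (hf m hm).1 h1 g hh1m
    exact ⟨h2, by rw [Category.assoc, hh2, hh1], hh2m⟩
  · intro h h' hle hlem
    refine (hf m hm).2 h h' ?_ hlem
    refine (he m hm).2 (f ≫ h) (f ≫ h') (by simpa only [Category.assoc] using hle) ?_
    simpa only [Category.assoc] using comp_le_comp_left f hlem

theorem IsSo.of_comp {A B D : C} {a : A ⟶ B} {b : B ⟶ D} (hab : IsSo (a ≫ b)) :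
    IsSo b := by
  intro X Y m hm
  constructor
  · intro f g hfg
    obtain ⟨h, -, hhm⟩ :=
      (hab m hm).1 (a ≫ f) g (by rw [Category.assoc, hfg, Category.assoc])
    exact ⟨h, hm.eq_of_comp_eq (by rw [Category.assoc, hhm, hfg]), hhm⟩
  · intro h h' hle hlem
    exact (hab m hm).2 h h' (by simpa only [Category.assoc] using comp_le_comp_left a hle) hlem

theorem EffectiveEpiP.isSo {X Y : C} {p : X ⟶ Y} (hp : EffectiveEpiP p) : IsSo p := by
  obtain ⟨W, u, v, hle, hfac, hepi⟩ := hp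
  intro A B m hm
  refine ⟨fun f g hfg => ?_, fun h h' hle' _ => hepi h h' hle'⟩
  have huv : u ≫ f ≤ v ≫ f := hm _ _ <| by
    calc (u ≫ f) ≫ m = (u ≫ p) ≫ g := by simp only [Category.assoc, hfg]
      _ ≤ (v ≫ p) ≫ g := comp_le_comp_right hle g
      _ = (v ≫ f) ≫ m := by simp only [Category.assoc, hfg]
  obtain ⟨t, ht⟩ := hfac f huv
  refine ⟨t, ht, le_antisymm (hepi _ _ ?_) (hepi _ _ ?_)⟩ <;>
    rw [← Category.assoc, ht, hfg]

theorem IsSo.isIso_of_orderMono {A B : C} {m : A ⟶ B} (hso : IsSo m) (hm : OrderMono m) :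
    IsIso m := by
  obtain ⟨s, hs1, hs2⟩ := (hso m hm).1 (𝟙 A) (𝟙 B) (by simp)
  exact ⟨s, hs1, hs2⟩

abbrev discretePosEnriched (D : Type) [SmallCategory D] : PosEnriched D where
  homOrder _ _ :=
    { le := Eq
      le_refl := Eq.refl
      le_trans _ _ _ := Eq.trans
      le_antisymm _ _ h _ := h }
  comp_mono := by
    rintro _ _ _ _ _ _ _ ⟨⟩ ⟨⟩
    rfl

instance : PosEnriched (Discrete WalkingPair) := discretePosEnriched _

instance : PosEnriched WalkingParallelPair := discretePosEnriched _

def pairWeight : PosWeight (Discrete WalkingPair) where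
  obj _ := PUnit
  po _ := inferInstance
  map _ x := x
  map_monotone _ _ _ h := h
  map_id _ _ := rfl
  map_comp _ _ _ := rfl
  map_le _ _ := le_rfl

theorem pairWeight_isFiniteWeight : pairWeight.IsFiniteWeight :=
  ⟨inferInstance, fun _ _ => Finite.of_subsingleton, fun _ => inferInstanceAs (Finite PUnit)⟩

def pairPosFunctor (X Y : C) : PosFunctor (Discrete WalkingPair) C where
  toFunctor := pair X Y
  map_le := by
    rintro _ _ _ _ ⟨⟩
    exact le_rfl

def pairCylinder {X Y Z : C} (f : Z ⟶ X) (g : Z ⟶ Y) :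
    Cylinder pairWeight (pairPosFunctor X Y) Z where
  app j _ := (BinaryFan.mk f g).π.app j
  monotone _ _ _ _ := le_rfl
  naturality φ _ := (BinaryFan.mk f g).w φ

theorem exists_isBinProdP (hC : HasFiniteWeightedLimitsP C) (X Y : C) :
    ∃ (P : C) (p0 : P ⟶ X) (p1 : P ⟶ Y), IsBinProdP p0 p1 := by
  obtain ⟨L, c, hweak, hrefl⟩ :=
    hC _ pairWeight (pairPosFunctor X Y) pairWeight_isFiniteWeight
  refine ⟨L, c.app ⟨.left⟩ ⟨⟩, c.app ⟨.right⟩ ⟨⟩, fun f g => ?_, fun h h' hl hr => ?_⟩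
  · obtain ⟨w, hw⟩ := hweak _ (pairCylinder f g)
    exact ⟨w, hw _ ⟨⟩, hw _ ⟨⟩⟩
  · exact hrefl _ h h' (by rintro ⟨_ | _⟩ ⟨⟩ <;> assumption)

/-- The weight of an inserter: the point over the source and the chain `false < true` over
the target, the two arrows picking out its two elements. -/
abbrev inserterWeight : PosWeight WalkingParallelPair where
  obj
    | .zero => PUnit
    | .one => Bool
  po
    | .zero => inferInstanceAs (PartialOrder PUnit)
    | .one => inferInstanceAs (PartialOrder Bool)
  map {_ _} f x := match f with
    | .left => false
    | .right => true
    | .id _ => x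
  map_monotone {_ _} f x y h := by
    cases f using WalkingParallelPairHom.casesOn
    exacts [le_rfl, le_rfl, h]
  map_id _ _ := rfl
  map_comp {_ _ _} f g x := by
    cases f using WalkingParallelPairHom.casesOn <;>
      cases g using WalkingParallelPairHom.casesOn <;> rfl
  map_le := by
    rintro _ (_ | _) f _ ⟨⟩ x
    exacts [le_rfl, le_rfl]

theorem inserterWeight_isFiniteWeight : inserterWeight.IsFiniteWeight := by
  refine ⟨inferInstance, inferInstance, ?_⟩
  rintro (_ | _)
  exacts [inferInstanceAs (Finite PUnit), inferInstanceAs (Finite Bool)]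

abbrev inserterPosFunctor {A Z : C} (s t : A ⟶ Z) : PosFunctor WalkingParallelPair C where
  toFunctor := parallelPair s t
  map_le := by
    rintro _ _ _ _ ⟨⟩
    exact le_rfl

def inserterCylinder {A Z Q : C} (s t : A ⟶ Z) (h : Q ⟶ A) (hst : h ≫ s ≤ h ≫ t) :
    Cylinder inserterWeight (inserterPosFunctor s t) Q where
  app
    | .zero, _ => h
    | .one, b => bif b then h ≫ t else h ≫ s
  monotone := by
    rintro (_ | _) x y hxy
    · exact le_rfl
    · cases x <;> cases y
      exacts [le_rfl, hst, absurd hxy (by simp), le_rfl]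
  naturality {_ _} f _ := by
    cases f using WalkingParallelPairHom.casesOn
    exacts [rfl, rfl, Category.comp_id _]

theorem exists_isInserterP (hC : HasFiniteWeightedLimitsP C) {A Z : C} (s t : A ⟶ Z) :
    ∃ (I : C) (e : I ⟶ A), IsInserterP s t e := by
  obtain ⟨L, c, hweak, hrefl⟩ :=
    hC _ inserterWeight (inserterPosFunctor s t) inserterWeight_isFiniteWeight
  have hs : c.app .zero ⟨⟩ ≫ s = c.app .one false := c.naturality .left ⟨⟩
  have ht : c.app .zero ⟨⟩ ≫ t = c.app .one true := c.naturality .right ⟨⟩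
  refine ⟨L, c.app .zero ⟨⟩, ?_, fun h hst => ?_, fun u v huv => hrefl _ u v ?_⟩
  · exact (hs.trans_le (c.monotone .one false true (by simp))).trans_eq ht.symm
  · obtain ⟨w, hw⟩ := hweak _ (inserterCylinder s t h hst)
    exact ⟨w, hw .zero ⟨⟩⟩
  · rintro (_ | _) (_ | _)
    · exact huv
    · rw [← hs, ← Category.assoc, ← Category.assoc]
      exact comp_le_comp_right huv s
    · rw [← ht, ← Category.assoc, ← Category.assoc]
      exact comp_le_comp_right huv t

theorem exists_isCommaP (hC : HasFiniteWeightedLimitsP C) {X Y Z : C} (f : X ⟶ Z) (g : Y ⟶ Z) :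
    ∃ (K : C) (c0 : K ⟶ X) (c1 : K ⟶ Y), IsCommaP f g c0 c1 := by
  obtain ⟨P, p0, p1, hex, hrefl⟩ := exists_isBinProdP hC X Y
  obtain ⟨K, e, hle, hfac, he⟩ := exists_isInserterP hC (p0 ≫ f) (p1 ≫ g)
  refine ⟨K, e ≫ p0, e ≫ p1, by simpa only [Category.assoc] using hle,
    fun u0 u1 hu => ?_, fun w w' h0 h1 => he w w' (hrefl _ _ ?_ ?_)⟩
  · obtain ⟨w, hw0, hw1⟩ := hex u0 u1
    obtain ⟨t, ht⟩ := hfac w (by simpa only [← Category.assoc, hw0, hw1] using hu)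
    exact ⟨t, by rw [← Category.assoc, ht, hw0], by rw [← Category.assoc, ht, hw1]⟩
  · simpa only [Category.assoc] using h0
  · simpa only [Category.assoc] using h1

theorem exists_isPullbackP (hC : HasFiniteWeightedLimitsP C) {X Y Z : C} (f : X ⟶ Z)
    (g : Y ⟶ Z) : ∃ (P : C) (p0 : P ⟶ X) (p1 : P ⟶ Y), IsPullbackP f g p0 p1 := by
  obtain ⟨K, c0, c1, hle, hfac, hrefl⟩ := exists_isCommaP hC f g
  obtain ⟨P, e, hge, hefac, he⟩ := exists_isInserterP hC (c1 ≫ g) (c0 ≫ f)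
  refine ⟨P, e ≫ c0, e ≫ c1, ?_, fun u0 u1 hu => ?_,
    fun w w' h0 h1 => he w w' (hrefl _ _ ?_ ?_)⟩
  · simpa only [Category.assoc] using le_antisymm (comp_le_comp_left e hle) hge
  · obtain ⟨w, hw0, hw1⟩ := hfac u0 u1 hu.le
    obtain ⟨t, ht⟩ := hefac w (by simp only [← Category.assoc, hw0, hw1, hu, le_rfl])
    exact ⟨t, by rw [← Category.assoc, ht, hw0], by rw [← Category.assoc, ht, hw1]⟩
  · simpa only [Category.assoc] using h0
  · simpa only [Category.assoc] using h1

theorem IsSo.le_of_comp_le (hC : HasFiniteWeightedLimitsP C) {A B Z : C} {e : A ⟶ B}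
    (he : IsSo e) {x y : B ⟶ Z} (hxy : e ≫ x ≤ e ≫ y) : x ≤ y := by
  obtain ⟨J, j, hj, hfac, hmono⟩ := exists_isInserterP hC x y
  obtain ⟨w, hw⟩ := hfac e hxy
  obtain ⟨s, -, hs⟩ := (he j hmono).1 w (𝟙 B) (by rw [hw, Category.comp_id])
  calc x = s ≫ j ≫ x := by rw [← Category.assoc, hs, Category.id_comp]
    _ ≤ s ≫ j ≫ y := comp_le_comp_left s hj
    _ = y := by rw [← Category.assoc, hs, Category.id_comp]

def RespectsKernel {A B Z : C} (e : A ⟶ B) (h : A ⟶ Z) : Prop :=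
  ∀ {V : C} (α β : V ⟶ A), α ≫ e ≤ β ≫ e → α ≫ h ≤ β ≫ h

theorem RespectsKernel.of_isCommaP {A B Z K : C} {e : A ⟶ B} {h : A ⟶ Z} {k0 k1 : K ⟶ A}
    (hk : IsCommaP e e k0 k1) (hkh : k0 ≫ h ≤ k1 ≫ h) : RespectsKernel e h := by
  intro V α β hαβ
  obtain ⟨t, rfl, rfl⟩ := hk.2.1 α β hαβ
  simpa only [Category.assoc] using comp_le_comp_left t hkh

theorem exists_isSo_cover (hE : IsRegularCat C) {A M U : C} {a : A ⟶ M} (ha : IsSo a)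
    (w : U ⟶ M) : ∃ (V : C) (g : V ⟶ U) (α : V ⟶ A), IsSo g ∧ g ≫ w = α ≫ a := by
  obtain ⟨V, α, g, hpb⟩ := exists_isPullbackP hE.1 a w
  exact ⟨V, g, α, hE.2.2 a w α g hpb ha, hpb.1.symm⟩

theorem RespectsKernel.of_isSo_comp (hE : IsRegularCat C) {A M B Z : C} {a : A ⟶ M}
    {m1 : M ⟶ B} {m2 : M ⟶ Z} (ha : IsSo a) (hk : RespectsKernel (a ≫ m1) (a ≫ m2)) :
    RespectsKernel m1 m2 := by
  intro U w w' hw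
  obtain ⟨V, g, α, hg, hα⟩ := exists_isSo_cover hE ha w
  obtain ⟨V', g', β, hg', hβ⟩ := exists_isSo_cover hE ha (g ≫ w')
  have hα' : (g' ≫ g) ≫ w = (g' ≫ α) ≫ a := by simp only [Category.assoc, hα]
  have hβ' : (g' ≫ g) ≫ w' = β ≫ a := by rw [Category.assoc, hβ]
  refine IsSo.le_of_comp_le hE.1 (IsSo.comp hg' hg) ?_
  have key := hk (g' ≫ α) β <| by
    simpa only [← Category.assoc, ← hα', ← hβ'] using comp_le_comp_left (g' ≫ g) hw
  simpa only [← Category.assoc, ← hα', ← hβ'] using key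

theorem IsSo.exists_comp_eq_of_respectsKernel (hE : IsRegularCat C) {A B Z : C} {e : A ⟶ B}
    {h : A ⟶ Z} (he : IsSo e) (hk : RespectsKernel e h) : ∃ t : B ⟶ Z, e ≫ t = h := by
  obtain ⟨P, pB, pZ, hex, hrefl⟩ := exists_isBinProdP hE.1 B Z
  obtain ⟨k, hkB, hkZ⟩ := hex e h
  obtain ⟨M, a, n, ha, hn, rfl⟩ := hE.2.1 k
  rw [Category.assoc] at hkB hkZ
  have hso : IsSo (n ≫ pB) := IsSo.of_comp (a := a) (hkB ▸ he)
  have hker : RespectsKernel (n ≫ pB) (n ≫ pZ) :=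
    RespectsKernel.of_isSo_comp hE ha (hkB ▸ hkZ ▸ hk)
  have hmono : OrderMono (n ≫ pB) := fun w w' hw =>
    hn w w' (hrefl _ _ (by simpa only [Category.assoc] using hw)
      (by simpa only [Category.assoc] using hker w w' hw))
  have := hso.isIso_of_orderMono hmono
  refine ⟨inv (n ≫ pB) ≫ n ≫ pZ, ?_⟩
  rw [← hkB, ← hkZ, Category.assoc, IsIso.hom_inv_id_assoc]

theorem IsSo.effectiveEpiP (hE : IsRegularCat C) {A B : C} {e : A ⟶ B} (he : IsSo e) :
    EffectiveEpiP e := by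
  obtain ⟨K, k0, k1, hk⟩ := exists_isCommaP hE.1 e e
  exact ⟨K, k0, k1, hk.1, fun h hkh => he.exists_comp_eq_of_respectsKernel hE
    (RespectsKernel.of_isCommaP hk hkh), fun _ _ => he.le_of_comp_le hE.1⟩

theorem isPullbackP_of_isInserterP {I X Y I' X' Y' : C} {f0 f1 : X ⟶ Y} {f0' f1' : X' ⟶ Y'}
    {i : I ⟶ X} {i' : I' ⟶ X'} {q : I ⟶ I'} {p : X ⟶ X'} {m : Y ⟶ Y'}
    (hi : IsInserterP f0 f1 i) (hi' : IsInserterP f0' f1' i') (hsq : q ≫ i' = i ≫ p)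
    (h0 : p ≫ f0' = f0 ≫ m) (h1 : p ≫ f1' = f1 ≫ m) (hm : OrderMono m) :
    IsPullbackP i' p q i := by
  refine ⟨hsq, fun u0 u1 hu => ?_, fun w w' _ hwi => hi.2.2 w w' hwi⟩
  have hle : u1 ≫ f0 ≤ u1 ≫ f1 := hm _ _ <| by
    calc (u1 ≫ f0) ≫ m = u0 ≫ i' ≫ f0' := by rw [Category.assoc, ← h0, ← reassoc_of% hu]
      _ ≤ u0 ≫ i' ≫ f1' := comp_le_comp_left u0 hi'.1
      _ = (u1 ≫ f1) ≫ m := by rw [reassoc_of% hu, h1, Category.assoc]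
  obtain ⟨w, hw⟩ := hi.2.1 u1 hle
  refine ⟨w, OrderMono.eq_of_comp_eq hi'.2.2 ?_, hw⟩
  rw [Category.assoc, hsq, reassoc_of% hw, hu]

end PosEnr

/-- a morphism of inserter rows over an effective epi and an order-mono
yields a pullback square, and the induced morphism of inserters is an effective epi. -/
theorem statement16 {E : Type u'} [Category.{v'} E] [PosEnriched E] (hE : IsRegularCat E)
    {I X Y I' X' Y' : E} (f0 f1 : X ⟶ Y) (f0' f1' : X' ⟶ Y')
    (i : I ⟶ X) (i' : I' ⟶ X') (q : I ⟶ I') (p : X ⟶ X') (m : Y ⟶ Y')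
    (hi : PosEnr.IsInserterP f0 f1 i) (hi' : PosEnr.IsInserterP f0' f1' i')
    (hsq : q ≫ i' = i ≫ p) (h0 : p ≫ f0' = f0 ≫ m) (h1 : p ≫ f1' = f1 ≫ m)
    (hp : PosEnr.EffectiveEpiP p) (hm : PosEnr.OrderMono m) :
    PosEnr.IsPullbackP i' p q i ∧ PosEnr.EffectiveEpiP q := by
  have hpb := PosEnr.isPullbackP_of_isInserterP hi hi' hsq h0 h1 hm
  exact ⟨hpb, IsSo.effectiveEpiP hE (hE.2.2 p i' i q hpb.symm hp.isSo)⟩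
end
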